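/- Let N be a semi-binary tree-child network and S a partial tree-child sequence each of whose elements reduces something in N when applied in order. Then there exists a minimal TCS for N that starts with S. Hence tree-child networks can be cherry-picked in any (tree-child-respecting) order. -/

import Mathlib

open scoped Classical

/-- A (representation of a) rooted phylogenetic network: vertices are natural
numbers, `E` is the edge set, `root` the root, `taxa` the set of taxa labelling
the leaves via `label`. -/
structure Network (X : Type) where
  V : Finset ℕ
  E : Finset (ℕ × ℕ)
  root : ℕ
  taxa : Finset X
  label : X → ℕ

namespace Network

variable {X : Type}

noncomputable def indeg (N : Network X) (v : ℕ) : ℕ :=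
  (N.E.filter (fun e => e.2 = v)).card

noncomputable def outdeg (N : Network X) (v : ℕ) : ℕ :=
  (N.E.filter (fun e => e.1 = v)).card

noncomputable def parents (N : Network X) (v : ℕ) : Finset ℕ :=
  (N.E.filter (fun e => e.2 = v)).image Prod.fst

noncomputable def children (N : Network X) (v : ℕ) : Finset ℕ :=
  (N.E.filter (fun e => e.1 = v)).image Prod.snd

/-- The parent of a vertex (meaningful when the vertex has a unique parent,
e.g. for leaves). -/
noncomputable def theParent (N : Network X) (v : ℕ) : ℕ :=
  (N.parents v).min.untopD 0

def IsLeafNode (N : Network X) (v : ℕ) : Prop := N.indeg v = 1 ∧ N.outdeg v = 0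

def IsTreeNode (N : Network X) (v : ℕ) : Prop := N.indeg v = 1 ∧ 2 ≤ N.outdeg v

def IsRetic (N : Network X) (v : ℕ) : Prop := 2 ≤ N.indeg v ∧ N.outdeg v = 1

/-- Well-formedness: a phylogenetic network has a single outdegree-1, indegree-0
root, leaves bijectively labelled by the taxa, all other nodes tree nodes or
reticulations, and it is acyclic. -/
def IsPhylo (N : Network X) : Prop :=
  N.root ∈ N.V ∧ N.indeg N.root = 0 ∧ N.outdeg N.root = 1 ∧
  (∀ e ∈ N.E, e.1 ∈ N.V ∧ e.2 ∈ N.V) ∧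
  Set.InjOn N.label ↑N.taxa ∧
  (∀ x ∈ N.taxa, N.label x ∈ N.V ∧ N.IsLeafNode (N.label x)) ∧
  (∀ v ∈ N.V, N.IsLeafNode v → ∃ x ∈ N.taxa, N.label x = v) ∧
  (∀ v ∈ N.V, v = N.root ∨ N.IsLeafNode v ∨ N.IsTreeNode v ∨ N.IsRetic v) ∧
  (∀ v : ℕ, ¬ Relation.TransGen (fun a b => (a, b) ∈ N.E) v v)

def SemiBinary (N : Network X) : Prop := ∀ v ∈ N.V, N.IsTreeNode v → N.outdeg v = 2

def IsBinary (N : Network X) : Prop :=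
  N.SemiBinary ∧ ∀ v ∈ N.V, N.IsRetic v → N.indeg v = 2

def StackFree (N : Network X) : Prop :=
  ∀ e ∈ N.E, ¬ (N.IsRetic e.1 ∧ N.IsRetic e.2)

def IsTreeChild (N : Network X) : Prop :=
  N.StackFree ∧
  ∀ v ∈ N.V, N.IsTreeNode v → ∃ c ∈ N.children v, N.IsTreeNode c ∨ N.IsLeafNode c

def IsTree (N : Network X) : Prop := ∀ v ∈ N.V, ¬ N.IsRetic v

/-- Number of reticulation edges minus number of reticulations. -/
noncomputable def reticulationNumber (N : Network X) : ℕ :=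
  (N.E.filter (fun e => N.IsRetic e.2)).card - (N.V.filter (fun v => N.IsRetic v)).card

/-- `(x, y)` is a cherry: two distinct leaves sharing a parent. -/
def IsCherry (N : Network X) (x y : X) : Prop :=
  x ∈ N.taxa ∧ y ∈ N.taxa ∧ x ≠ y ∧
  ∃ p : ℕ, (p, N.label x) ∈ N.E ∧ (p, N.label y) ∈ N.E

/-- `(x, y)` is a reticulated cherry: the parent of `x` is a reticulation, the
parent of `y` a tree node which is also a parent of the parent of `x`. -/
def IsRetCherry (N : Network X) (x y : X) : Prop :=
  x ∈ N.taxa ∧ y ∈ N.taxa ∧ x ≠ y ∧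
  ∃ px py : ℕ, (px, N.label x) ∈ N.E ∧ (py, N.label y) ∈ N.E ∧
    N.IsRetic px ∧ N.IsTreeNode py ∧ (py, px) ∈ N.E

def ReduciblePair (N : Network X) (x y : X) : Prop :=
  N.IsCherry x y ∨ N.IsRetCherry x y

noncomputable def delVert (N : Network X) (v : ℕ) : Network X :=
  { V := N.V.erase v,
    E := N.E.filter (fun e => e.1 ≠ v ∧ e.2 ≠ v),
    root := N.root, taxa := N.taxa, label := N.label }

noncomputable def delEdge (N : Network X) (e : ℕ × ℕ) : Network X :=
  { N with E := N.E.erase e }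

/-- Suppress a degree-2 (indegree-1, outdegree-1) vertex. -/
noncomputable def suppress (N : Network X) (v : ℕ) : Network X :=
  if N.indeg v = 1 ∧ N.outdeg v = 1 then
    { V := N.V.erase v,
      E := (N.E.filter (fun e => e.1 ≠ v ∧ e.2 ≠ v)) ∪ (N.parents v ×ˢ N.children v),
      root := N.root, taxa := N.taxa, label := N.label }
  else N

/-- Reduce an ordered pair `(x, y)`: in the cherry case delete the leaf `x` and
suppress its parent; in the reticulated-cherry case delete the reticulation edge
between the two parents and suppress the resulting degree-2 vertices; otherwise
do nothing. -/
noncomputable def reducePair (N : Network X) (c : X × X) : Network X :=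
  if N.IsCherry c.1 c.2 then
    suppress
      { V := N.V.erase (N.label c.1),
        E := N.E.filter (fun e => e.1 ≠ N.label c.1 ∧ e.2 ≠ N.label c.1),
        root := N.root, taxa := N.taxa.erase c.1, label := N.label }
      (N.theParent (N.label c.1))
  else if N.IsRetCherry c.1 c.2 then
    (((N.delEdge (N.theParent (N.label c.2), N.theParent (N.label c.1))).suppress
        (N.theParent (N.label c.2))).suppress (N.theParent (N.label c.1)))
  else N

/-- Successive reduction of a network by a sequence of ordered pairs. -/
noncomputable def reduceSeq (N : Network X) (S : List (X × X)) : Network X :=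
  S.foldl (fun M c => M.reducePair c) N

/-- A network consisting of a single leaf, its root, and the edge between them. -/
def IsSingleLeaf (N : Network X) : Prop :=
  ∃ x ∈ N.taxa, N.V = {N.root, N.label x} ∧ N.E = {(N.root, N.label x)} ∧
    N.root ≠ N.label x

/-- `S` reduces `N` to a single-leaf network. -/
def Reduces (S : List (X × X)) (N : Network X) : Prop :=
  (N.reduceSeq S).IsSingleLeaf

/-- A cherry-picking sequence: ordered pairs of distinct taxa such that each
second coordinate reappears later as a first coordinate, or is the second
coordinate of the last pair. -/
def IsCPS (S : List (X × X)) : Prop :=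
  (∀ p ∈ S, p.1 ≠ p.2) ∧
  ∀ (i : ℕ) (hi : i < S.length),
    ((S.get ⟨i, hi⟩).2 ∈ (S.drop (i + 1)).map Prod.fst) ∨
    (∃ q, S.getLast? = some q ∧ (S.get ⟨i, hi⟩).2 = q.2)

/-- A tree-child sequence: a CPS in which a leaf appearing as a first coordinate
never appears later as a second coordinate. -/
def IsTCS (S : List (X × X)) : Prop :=
  IsCPS S ∧
  ∀ (i j : ℕ) (hi : i < S.length) (hj : j < S.length),
    i < j → (S.get ⟨i, hi⟩).1 ≠ (S.get ⟨j, hj⟩).2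

def IsPartialCPS (S : List (X × X)) : Prop := ∃ T, IsCPS (S ++ T)

def IsPartialTCS (S : List (X × X)) : Prop := ∃ T, IsTCS (S ++ T)

/-- A minimal CPS for `N`: a CPS reducing `N` in which every pair changes the
network. -/
def IsMinimalCPS (S : List (X × X)) (N : Network X) : Prop :=
  IsCPS S ∧ Reduces S N ∧
  ∀ i < S.length, N.reduceSeq (S.take (i + 1)) ≠ N.reduceSeq (S.take i)

def IsMinimalTCS (S : List (X × X)) (N : Network X) : Prop :=
  IsTCS S ∧ Reduces S N ∧
  ∀ i < S.length, N.reduceSeq (S.take (i + 1)) ≠ N.reduceSeq (S.take i)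

/-- A cherry-picking network: a phylogenetic network reducible by some CPS. -/
def IsCPN (N : Network X) : Prop :=
  N.IsPhylo ∧ ∃ S, IsCPS S ∧ Reduces S N

/-- A directed path in `N`, given as its list of vertices. -/
def IsDipath (N : Network X) (l : List ℕ) : Prop :=
  l.Chain' (fun a b => (a, b) ∈ N.E)

def pathEdges (l : List ℕ) : List (ℕ × ℕ) := l.zip l.tail

/-- An embedding of `N'` into `N`: an injective node map and a map of edges to
edge-disjoint directed paths, respecting the node map and the leaf labels. -/
def IsEmbedding (N' N : Network X) (f : ℕ → ℕ) (g : ℕ × ℕ → List ℕ) : Prop :=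
  (∀ v ∈ N'.V, f v ∈ N.V) ∧
  Set.InjOn f ↑N'.V ∧
  (∀ x ∈ N'.taxa, f (N'.label x) = N.label x) ∧
  (∀ e ∈ N'.E, N.IsDipath (g e) ∧ (g e).head? = some (f e.1) ∧
    (g e).getLast? = some (f e.2)) ∧
  (∀ e ∈ N'.E, ∀ e' ∈ N'.E, e ≠ e' →
    ∀ p ∈ pathEdges (g e), p ∉ pathEdges (g e'))

/-- `N'` is a subnetwork of `N` if `N'` embeds into `N`. -/
def IsSubnetwork (N' N : Network X) : Prop :=
  ∃ f g, IsEmbedding N' N f g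

/-- Contract the edge `(u, v)`, identifying `v` with `u`. -/
noncomputable def contractEdge (N : Network X) (u v : ℕ) : Network X :=
  { V := N.V.erase v,
    E := (N.E.erase (u, v)).image
      (fun e => ((if e.1 = v then u else e.1), (if e.2 = v then u else e.2))),
    root := if N.root = v then u else N.root,
    taxa := N.taxa,
    label := fun x => if N.label x = v then u else N.label x }

def ContractStep (N M : Network X) : Prop :=
  ∃ u v : ℕ, (u, v) ∈ N.E ∧ M = N.contractEdge u v

/-- `N` is a refinement of `M` if `M` can be obtained from `N` by contracting
some edges. -/
def IsRefinement (N M : Network X) : Prop :=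
  Relation.ReflTransGen ContractStep N M

/-- `N` contains `M` if some refinement of `M` is a subnetwork of `N`. -/
def Contains (N M : Network X) : Prop :=
  ∃ M' : Network X, IsRefinement M' M ∧ IsSubnetwork M' N

/-- Isomorphism of labelled networks. -/
def Isomorphic (N N' : Network X) : Prop :=
  N.taxa = N'.taxa ∧
  ∃ f : ℕ → ℕ, Set.BijOn f ↑N.V ↑N'.V ∧
    (∀ u ∈ N.V, ∀ v ∈ N.V, ((u, v) ∈ N.E ↔ (f u, f v) ∈ N'.E)) ∧
    f N.root = N'.root ∧
    (∀ x ∈ N.taxa, f (N.label x) = N'.label x)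

end Network

/-!
The sequence is extended greedily. Along a reduction in tree-child order the network stays a
semi-binary tree-child network, and the set `F` of leaves already used as first coordinates stays
separated: a leaf of `F` below a tree node has neither a reticulation nor another leaf of `F` as
a sibling. If such a network is not a single leaf, a lowest tree node has a leaf child `y`, and
its other child is a leaf `x` or a reticulation above a leaf `x`. Separation makes `(x, y)` or
`(y, x)` a cherry or a reticulated cherry whose second leaf is not in `F`, so appending it keeps
the sequence tree-child, and reducing it keeps `F` (enlarged by its first leaf) separated. Each
reduction deletes a vertex, so the process ends at a single leaf; a second coordinate either
reappears later as a first coordinate or survives to that last leaf, which is the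
cherry-picking condition.
-/

namespace Finset

variable {α : Type*}

lemma exists_maximal_of_acyclic {r : α → α → Prop} (hr : ∀ v, ¬ Relation.TransGen r v v)
    {s : Finset α} (hs : s.Nonempty) : ∃ a ∈ s, ∀ b ∈ s, ¬ Relation.TransGen r a b := by
  let R : s → s → Prop := fun a b => Relation.TransGen r b a
  have : IsTrans s R := ⟨fun _ _ _ hab hbc => hbc.trans hab⟩
  have : Std.Irrefl R := ⟨fun a => hr a⟩
  obtain ⟨⟨a, ha⟩, -, hmin⟩ :=
    (Finite.wellFounded_of_trans_of_irrefl R).has_min Set.univ ⟨⟨_, hs.choose_spec⟩, trivial⟩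
  exact ⟨a, ha, fun b hb hab => hmin ⟨b, hb⟩ trivial hab⟩

variable [DecidableEq α]

lemma card_filter_erase_of_not {p : α → Prop} [DecidablePred p]
    {s : Finset α} {e : α} (he : ¬ p e) : ((s.erase e).filter p).card = (s.filter p).card := by
  rw [Finset.filter_erase, Finset.erase_eq_of_notMem (by simp [he])]

lemma card_filter_erase_of_mem {p : α → Prop} [DecidablePred p]
    {s : Finset α} {e : α} (he : p e) (hs : e ∈ s) :
    ((s.erase e).filter p).card = (s.filter p).card - 1 := by
  rw [Finset.filter_erase, Finset.card_erase_of_mem (by simp [he, hs])]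

lemma card_filter_insert_erase {p : α → Prop} [DecidablePred p]
    {s : Finset α} {e e' : α} (he : e ∈ s) (he' : e' ∉ s.erase e) (hp : p e' ↔ p e) :
    ((insert e' (s.erase e)).filter p).card = (s.filter p).card := by
  by_cases h : p e
  · rw [Finset.filter_insert, if_pos (hp.2 h), Finset.card_insert_of_notMem (by simp_all),
      card_filter_erase_of_mem h he]
    have := Finset.card_pos.2 ⟨e, Finset.mem_filter.2 ⟨he, h⟩⟩
    omega
  · rw [Finset.filter_insert, if_neg (mt hp.1 h), card_filter_erase_of_not h]

end Finset

namespace Network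

variable {X : Type}

/-! ### Parents and children -/

section

variable (M : Network X)

lemma mem_parents_iff {u v : ℕ} : u ∈ M.parents v ↔ (u, v) ∈ M.E := by
  simp [parents]

lemma mem_children_iff {v w : ℕ} : w ∈ M.children v ↔ (v, w) ∈ M.E := by
  simp [children]

lemma indeg_eq_card_parents (v : ℕ) : M.indeg v = (M.parents v).card :=
  (Finset.card_image_of_injOn fun _ he _ he' h =>
    Prod.ext h ((Finset.mem_filter.1 he).2.trans (Finset.mem_filter.1 he').2.symm)).symm

lemma outdeg_eq_card_children (v : ℕ) : M.outdeg v = (M.children v).card :=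
  (Finset.card_image_of_injOn fun _ he _ he' h =>
    Prod.ext ((Finset.mem_filter.1 he).2.trans (Finset.mem_filter.1 he').2.symm) h).symm

variable {M}

lemma indeg_pos {u v : ℕ} (h : (u, v) ∈ M.E) : 0 < M.indeg v :=
  M.indeg_eq_card_parents v ▸ Finset.card_pos.2 ⟨u, M.mem_parents_iff.2 h⟩

lemma outdeg_pos {v w : ℕ} (h : (v, w) ∈ M.E) : 0 < M.outdeg v :=
  M.outdeg_eq_card_children v ▸ Finset.card_pos.2 ⟨w, M.mem_children_iff.2 h⟩

lemma mem_E_iff_of_indeg_eq_one {u v : ℕ} (hv : M.indeg v = 1) (hu : (u, v) ∈ M.E) (x : ℕ) :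
    (x, v) ∈ M.E ↔ x = u := by
  obtain ⟨p, hp⟩ := Finset.card_eq_one.1 (M.indeg_eq_card_parents v ▸ hv)
  have key : ∀ x, (x, v) ∈ M.E ↔ x = p := by simp [← mem_parents_iff, hp]
  rw [key, (key u).1 hu]

lemma mem_E_iff_of_outdeg_eq_one {v w : ℕ} (hv : M.outdeg v = 1) (hw : (v, w) ∈ M.E) (x : ℕ) :
    (v, x) ∈ M.E ↔ x = w := by
  obtain ⟨c, hc⟩ := Finset.card_eq_one.1 (M.outdeg_eq_card_children v ▸ hv)
  have key : ∀ x, (v, x) ∈ M.E ↔ x = c := by simp [← mem_children_iff, hc]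
  rw [key, (key w).1 hw]

lemma ne_of_outdeg_eq_one {u v w x : ℕ} (hu : M.outdeg u = 1) (huw : (u, w) ∈ M.E)
    (hx : (x, v) ∈ M.E) (hvw : v ≠ w) : x ≠ u := by
  rintro rfl; exact hvw ((mem_E_iff_of_outdeg_eq_one hu huw v).1 hx)

lemma mem_E_iff_of_indeg_eq_two {u₁ u₂ v : ℕ} (hv : M.indeg v = 2) (h₁ : (u₁, v) ∈ M.E)
    (h₂ : (u₂, v) ∈ M.E) (hne : u₁ ≠ u₂) (x : ℕ) : (x, v) ∈ M.E ↔ x = u₁ ∨ x = u₂ := by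
  have hsub : {u₁, u₂} ⊆ M.parents v := by
    simp [Finset.insert_subset_iff, mem_parents_iff, h₁, h₂]
  have hp := Finset.eq_of_subset_of_card_le hsub
    (by rw [← indeg_eq_card_parents, hv, Finset.card_pair hne])
  simp [← mem_parents_iff, ← hp]

lemma mem_E_iff_of_outdeg_eq_two {v w₁ w₂ : ℕ} (hv : M.outdeg v = 2) (h₁ : (v, w₁) ∈ M.E)
    (h₂ : (v, w₂) ∈ M.E) (hne : w₁ ≠ w₂) (x : ℕ) : (v, x) ∈ M.E ↔ x = w₁ ∨ x = w₂ := by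
  have hsub : {w₁, w₂} ⊆ M.children v := by
    simp [Finset.insert_subset_iff, mem_children_iff, h₁, h₂]
  have hc := Finset.eq_of_subset_of_card_le hsub
    (by rw [← outdeg_eq_card_children, hv, Finset.card_pair hne])
  simp [← mem_children_iff, ← hc]

lemma exists_ne_of_outdeg_eq_two {v w : ℕ} (hv : M.outdeg v = 2) :
    ∃ c, (v, c) ∈ M.E ∧ c ≠ w := by
  obtain ⟨c₁, c₂, hne, hc⟩ := Finset.card_eq_two.1 (M.outdeg_eq_card_children v ▸ hv)
  have h₁ : (v, c₁) ∈ M.E := M.mem_children_iff.1 (by simp [hc])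
  have h₂ : (v, c₂) ∈ M.E := M.mem_children_iff.1 (by simp [hc])
  by_cases hw : c₁ = w
  · exact ⟨c₂, h₂, fun h => hne (hw.trans h.symm)⟩
  · exact ⟨c₁, h₁, hw⟩

lemma exists_ne_of_two_le_indeg {v u : ℕ} (hv : 2 ≤ M.indeg v) :
    ∃ x, (x, v) ∈ M.E ∧ x ≠ u := by
  obtain ⟨x, hx, hxu⟩ := (Finset.one_lt_card_iff_nontrivial.1
    (M.indeg_eq_card_parents v ▸ hv)).exists_ne u
  exact ⟨x, M.mem_parents_iff.1 hx, hxu⟩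

lemma exists_mem_E_of_indeg_pos {v : ℕ} (hv : 0 < M.indeg v) : ∃ u, (u, v) ∈ M.E := by
  obtain ⟨u, hu⟩ := Finset.card_pos.1 (M.indeg_eq_card_parents v ▸ hv)
  exact ⟨u, M.mem_parents_iff.1 hu⟩

lemma theParent_eq {u v : ℕ} (h : ∀ x, (x, v) ∈ M.E ↔ x = u) : M.theParent v = u := by
  have : M.parents v = {u} := by ext x; simp [mem_parents_iff, h]
  rw [theParent, this, Finset.min_singleton]
  rfl

lemma IsLeafNode.ne_of_isTreeNode {u v : ℕ} (hu : M.IsLeafNode u) (hv : M.IsTreeNode v) :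
    u ≠ v := by
  rintro rfl; have := hu.2; have := hv.2; omega

lemma IsLeafNode.ne_of_isRetic {u v : ℕ} (hu : M.IsLeafNode u) (hv : M.IsRetic v) : u ≠ v := by
  rintro rfl; have := hu.2; have := hv.2; omega

lemma IsTreeNode.ne_of_isRetic {u v : ℕ} (hu : M.IsTreeNode u) (hv : M.IsRetic v) : u ≠ v := by
  rintro rfl; have := hu.2; have := hv.2; omega

lemma IsLeafNode.not_mem_E {v w : ℕ} (hv : M.IsLeafNode v) : (v, w) ∉ M.E :=
  fun h => by have := outdeg_pos h; have := hv.2; omega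

lemma IsLeafNode.ne_of_mem_E {v u w : ℕ} (hv : M.IsLeafNode v) (he : (u, w) ∈ M.E) : u ≠ v := by
  rintro rfl; exact hv.not_mem_E he

end

/-! ### Deleting an edge and suppressing a vertex -/

section

variable {M : Network X}

@[simp] lemma delEdge_root (f : ℕ × ℕ) : (M.delEdge f).root = M.root := rfl
@[simp] lemma delEdge_taxa (f : ℕ × ℕ) : (M.delEdge f).taxa = M.taxa := rfl
@[simp] lemma delEdge_label (f : ℕ × ℕ) : (M.delEdge f).label = M.label := rfl

lemma mem_delEdge_E {f e : ℕ × ℕ} : e ∈ (M.delEdge f).E ↔ e ∈ M.E ∧ e ≠ f := by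
  simp [delEdge, and_comm]

lemma indeg_delEdge_of_ne {f : ℕ × ℕ} {v : ℕ} (hv : v ≠ f.2) :
    (M.delEdge f).indeg v = M.indeg v :=
  Finset.card_filter_erase_of_not (p := fun e : ℕ × ℕ => e.2 = v) (Ne.symm hv)

lemma outdeg_delEdge_of_ne {f : ℕ × ℕ} {v : ℕ} (hv : v ≠ f.1) :
    (M.delEdge f).outdeg v = M.outdeg v :=
  Finset.card_filter_erase_of_not (p := fun e : ℕ × ℕ => e.1 = v) (Ne.symm hv)

lemma indeg_delEdge {f : ℕ × ℕ} (hf : f ∈ M.E) : (M.delEdge f).indeg f.2 = M.indeg f.2 - 1 :=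
  Finset.card_filter_erase_of_mem (p := fun e : ℕ × ℕ => e.2 = f.2) rfl hf

@[simp] lemma suppress_root {v : ℕ} : (M.suppress v).root = M.root := by
  unfold suppress; split_ifs <;> rfl

@[simp] lemma suppress_taxa {v : ℕ} : (M.suppress v).taxa = M.taxa := by
  unfold suppress; split_ifs <;> rfl

@[simp] lemma suppress_label {v : ℕ} : (M.suppress v).label = M.label := by
  unfold suppress; split_ifs <;> rfl

lemma suppress_of_indeg_ne_one {v : ℕ} (hv : M.indeg v ≠ 1) : M.suppress v = M := by
  rw [suppress, if_neg (fun h => hv h.1)]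

lemma suppress_eq_of_unique {u v w : ℕ} (hu : ∀ x, (x, v) ∈ M.E ↔ x = u)
    (hw : ∀ y, (v, y) ∈ M.E ↔ y = w) :
    M.suppress v = ⟨M.V.erase v, M.E.filter (fun e => e.1 ≠ v ∧ e.2 ≠ v) ∪ {(u, w)}, M.root,
      M.taxa, M.label⟩ := by
  have hpar : M.parents v = {u} := by ext x; simp [mem_parents_iff, hu]
  have hchi : M.children v = {w} := by ext x; simp [mem_children_iff, hw]
  rw [suppress, if_pos ⟨by rw [indeg_eq_card_parents, hpar, Finset.card_singleton],
    by rw [outdeg_eq_card_children, hchi, Finset.card_singleton]⟩, hpar, hchi,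
    Finset.singleton_product_singleton]

lemma suppress_V {u v w : ℕ} (hu : ∀ x, (x, v) ∈ M.E ↔ x = u)
    (hw : ∀ y, (v, y) ∈ M.E ↔ y = w) : (M.suppress v).V = M.V.erase v := by
  rw [suppress_eq_of_unique hu hw]

lemma mem_suppress_E {u v w : ℕ} (hu : ∀ x, (x, v) ∈ M.E ↔ x = u)
    (hw : ∀ y, (v, y) ∈ M.E ↔ y = w) {e : ℕ × ℕ} :
    e ∈ (M.suppress v).E ↔ (e ∈ M.E ∧ e.1 ≠ v ∧ e.2 ≠ v) ∨ e = (u, w) := by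
  simp [suppress_eq_of_unique hu hw, or_comm]

lemma suppress_E {u v w : ℕ} (hu : ∀ x, (x, v) ∈ M.E ↔ x = u)
    (hw : ∀ y, (v, y) ∈ M.E ↔ y = w) :
    (M.suppress v).E = insert (u, w) ((M.E.erase (u, v)).erase (v, w)) := by
  ext ⟨x, y⟩
  simp only [mem_suppress_E hu hw, Finset.mem_insert, Finset.mem_erase, ne_eq, Prod.mk.injEq]
  constructor
  · rintro (⟨he, hx, hy⟩ | h)
    · exact Or.inr ⟨fun h => hx h.1, fun h => hy h.2, he⟩
    · exact Or.inl h
  · rintro (h | ⟨h₁, h₂, he⟩)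
    · exact Or.inr h
    · exact Or.inl ⟨he, fun hx => h₁ ⟨hx, (hw y).1 (hx ▸ he)⟩,
        fun hy => h₂ ⟨(hu x).1 (hy ▸ he), hy⟩⟩

lemma indeg_suppress {u v w x : ℕ} (hu : ∀ x, (x, v) ∈ M.E ↔ x = u)
    (hw : ∀ y, (v, y) ∈ M.E ↔ y = w) (huw : (u, w) ∉ M.E) (hx : x ≠ v) :
    (M.suppress v).indeg x = M.indeg x := by
  have hvw : (v, w) ∈ M.E := (hw w).2 rfl
  have hne : (v, w) ≠ (u, v) := fun h => huw (by simp_all)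
  rw [indeg, suppress_E hu hw, Finset.card_filter_insert_erase (e' := (u, w))
    (Finset.mem_erase.2 ⟨hne, hvw⟩) (by simp [huw]) Iff.rfl]
  exact Finset.card_filter_erase_of_not (p := fun e : ℕ × ℕ => e.2 = x) (Ne.symm hx)

lemma outdeg_suppress {u v w x : ℕ} (hu : ∀ x, (x, v) ∈ M.E ↔ x = u)
    (hw : ∀ y, (v, y) ∈ M.E ↔ y = w) (huw : (u, w) ∉ M.E) (hx : x ≠ v) :
    (M.suppress v).outdeg x = M.outdeg x := by
  have huv : (u, v) ∈ M.E := (hu u).2 rfl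
  have hne : (u, v) ≠ (v, w) := fun h => huw (by simp_all)
  rw [outdeg, suppress_E hu hw, Finset.erase_right_comm,
    Finset.card_filter_insert_erase (e' := (u, w))
    (Finset.mem_erase.2 ⟨hne, huv⟩) (by simp [huw]) Iff.rfl]
  exact Finset.card_filter_erase_of_not (p := fun e : ℕ × ℕ => e.1 = x) (Ne.symm hx)

end

/-! ### Semi-binary tree-child networks -/

section

/-- `IsPhylo ∧ SemiBinary ∧ IsTreeChild`, unfolded into named fields. -/
structure IsSBTC (M : Network X) : Prop where
  root_mem : M.root ∈ M.V
  indeg_root : M.indeg M.root = 0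
  outdeg_root : M.outdeg M.root = 1
  mem_V : ∀ e ∈ M.E, e.1 ∈ M.V ∧ e.2 ∈ M.V
  label_injOn : Set.InjOn M.label M.taxa
  label_mem : ∀ x ∈ M.taxa, M.label x ∈ M.V ∧ M.IsLeafNode (M.label x)
  exists_label : ∀ v ∈ M.V, M.IsLeafNode v → ∃ x ∈ M.taxa, M.label x = v
  classify : ∀ v ∈ M.V, v = M.root ∨ M.IsLeafNode v ∨ M.IsTreeNode v ∨ M.IsRetic v
  acyclic : ∀ v, ¬ Relation.TransGen (fun a b => (a, b) ∈ M.E) v v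
  semiBinary : M.SemiBinary
  stackFree : M.StackFree
  treeChild : ∀ v ∈ M.V, M.IsTreeNode v → ∃ c ∈ M.children v, M.IsTreeNode c ∨ M.IsLeafNode c

lemma IsSBTC.of_isPhylo {N : Network X} (hN : N.IsPhylo) (hsb : N.SemiBinary)
    (htc : N.IsTreeChild) : N.IsSBTC :=
  let ⟨h₁, h₂, h₃, h₄, h₅, h₆, h₇, h₈, h₉⟩ := hN
  ⟨h₁, h₂, h₃, h₄, h₅, h₆, h₇, h₈, h₉, hsb, htc.1, htc.2⟩

namespace IsSBTC

variable {M : Network X}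

lemma isLeafNode_label (h : M.IsSBTC) {x : X} (hx : x ∈ M.taxa) : M.IsLeafNode (M.label x) :=
  (h.label_mem x hx).2

lemma label_ne (h : M.IsSBTC) {x y : X} (hx : x ∈ M.taxa) (hy : y ∈ M.taxa) (hxy : x ≠ y) :
    M.label x ≠ M.label y :=
  fun he => hxy (h.label_injOn hx hy he)

lemma mem_E_label_iff (h : M.IsSBTC) {x : X} {p : ℕ} (hx : x ∈ M.taxa)
    (hp : (p, M.label x) ∈ M.E) (u : ℕ) :
    (u, M.label x) ∈ M.E ↔ u = p :=
  mem_E_iff_of_indeg_eq_one (h.isLeafNode_label hx).1 hp u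

lemma ne_of_mem_E (h : M.IsSBTC) {u v : ℕ} (he : (u, v) ∈ M.E) : u ≠ v := by
  rintro rfl; exact h.acyclic u (Relation.TransGen.single he)

lemma ne_root (h : M.IsSBTC) {u v : ℕ} (he : (u, v) ∈ M.E) : v ≠ M.root := by
  rintro rfl; have := indeg_pos he; have := h.indeg_root; omega

lemma isTreeNode_of_ne (h : M.IsSBTC) {p c₁ c₂ : ℕ} (h₁ : (p, c₁) ∈ M.E) (h₂ : (p, c₂) ∈ M.E)
    (hne : c₁ ≠ c₂) : M.IsTreeNode p := by
  have h2 : 2 ≤ M.outdeg p := by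
    rw [outdeg_eq_card_children, ← Finset.card_pair hne]
    exact Finset.card_le_card (by simp [Finset.insert_subset_iff, mem_children_iff, h₁, h₂])
  rcases h.classify p (h.mem_V _ h₁).1 with hr | hl | ht | hr
  · have := h.outdeg_root; subst hr; omega
  · have := hl.2; omega
  · exact ht
  · have := hr.2; omega

end IsSBTC

end

/-! ### What is left after reducing a pair -/

section

/-- `v` has the same kind (root, leaf, tree node or reticulation) in `M'` as in `M`: only the
indegree of a reticulation may change. -/
def SameKindAt (M M' : Network X) (v : ℕ) : Prop :=
  M'.outdeg v = M.outdeg v ∧ (M'.indeg v = M.indeg v ∨ M.IsRetic v ∧ 2 ≤ M'.indeg v)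

namespace SameKindAt

variable {M M' : Network X} {v : ℕ}

lemma of_eq (hin : M'.indeg v = M.indeg v) (hout : M'.outdeg v = M.outdeg v) :
    SameKindAt M M' v :=
  ⟨hout, Or.inl hin⟩

lemma indeg_eq_zero (h : SameKindAt M M' v) (h0 : M.indeg v = 0) : M'.indeg v = 0 := by
  rcases h.2 with h' | ⟨hr, _⟩
  · rw [h', h0]
  · have := hr.1; omega

lemma isLeafNode_iff (h : SameKindAt M M' v) : M'.IsLeafNode v ↔ M.IsLeafNode v := by
  unfold IsLeafNode; rw [h.1]
  rcases h.2 with h' | ⟨hr, h'⟩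
  · rw [h']
  · have := hr.1; constructor <;> rintro ⟨h₁, h₂⟩ <;> omega

lemma isTreeNode_iff (h : SameKindAt M M' v) : M'.IsTreeNode v ↔ M.IsTreeNode v := by
  unfold IsTreeNode; rw [h.1]
  rcases h.2 with h' | ⟨hr, h'⟩
  · rw [h']
  · have := hr.2; constructor <;> rintro ⟨h₁, h₂⟩ <;> omega

lemma isRetic_iff (h : SameKindAt M M' v) : M'.IsRetic v ↔ M.IsRetic v := by
  rcases h.2 with h' | ⟨hr, h'⟩
  · unfold IsRetic; rw [h.1, h']
  · exact ⟨fun _ => hr, fun _ => ⟨h', h.1 ▸ hr.2⟩⟩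

end SameKindAt

/-- The common shape of what reducing a cherry or a reticulated cherry `(a, b)` leaves of `M`;
it is all that is needed to carry the invariants over to `M'`. -/
structure IsPairReduction (M : Network X) (a b : X) (M' : Network X) : Prop where
  V_ssubset : M'.V ⊂ M.V
  root_eq : M'.root = M.root
  root_mem : M.root ∈ M'.V
  label_eq : M'.label = M.label
  mem_taxa : ∀ x, x ∈ M'.taxa ↔ x ∈ M.taxa ∧ M.label x ∈ M'.V
  label_mem : ∀ x ∈ M.taxa, x ≠ a → M.label x ∈ M'.V
  mem_V : ∀ e ∈ M'.E, e.1 ∈ M'.V ∧ e.2 ∈ M'.V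
  sameKindAt : ∀ v ∈ M'.V, SameKindAt M M' v
  child_mem : ∀ v ∈ M'.V, ∀ c, (v, c) ∈ M.E →
    (v, c) ∈ M'.E ∨ ∃ ℓ, (v, ℓ) ∈ M'.E ∧ M.IsLeafNode ℓ
  new_edge : ∀ u w, (u, w) ∈ M'.E → (u, w) ∉ M.E →
    (w = M.label b ∧ Relation.TransGen (fun x y => (x, y) ∈ M.E) u w) ∨
    (w = M.label a ∧ ∃ r ∉ M'.V, (u, r) ∈ M.E ∧ (r, M.label a) ∈ M.E)
  isRetic_of_mem_taxa : a ∈ M'.taxa → ∀ r, (r, M.label a) ∈ M.E → M.IsRetic r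

namespace IsPairReduction

variable {M M' : Network X} {a b : X}

lemma card_lt (hR : IsPairReduction M a b M') : M'.V.card < M.V.card :=
  Finset.card_lt_card hR.V_ssubset

lemma mem_taxa_of_ne (hR : IsPairReduction M a b M') {x : X} (hx : x ∈ M.taxa) (hxa : x ≠ a) :
    x ∈ M'.taxa :=
  (hR.mem_taxa x).2 ⟨hx, hR.label_mem x hx hxa⟩

lemma taxa_subset (hR : IsPairReduction M a b M') : M'.taxa ⊆ M.taxa :=
  fun x hx => ((hR.mem_taxa x).1 hx).1

lemma mem_E (hR : IsPairReduction M a b M') (h : M.IsSBTC) (ha : a ∈ M.taxa) (hb : b ∈ M.taxa)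
    {u w : ℕ} (he : (u, w) ∈ M'.E) :
    (u, w) ∈ M.E ∨ (M.IsLeafNode w ∧ Relation.TransGen (fun x y => (x, y) ∈ M.E) u w) := by
  by_cases hold : (u, w) ∈ M.E
  · exact Or.inl hold
  rcases hR.new_edge u w he hold with ⟨rfl, hp⟩ | ⟨rfl, r, -, hur, hra⟩
  · exact Or.inr ⟨h.isLeafNode_label hb, hp⟩
  · exact Or.inr ⟨h.isLeafNode_label ha, .head hur (.single hra)⟩

lemma isTreeNode_iff (hR : IsPairReduction M a b M') {v : ℕ} (hv : v ∈ M'.V) :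
    M'.IsTreeNode v ↔ M.IsTreeNode v :=
  (hR.sameKindAt v hv).isTreeNode_iff

lemma isRetic_iff (hR : IsPairReduction M a b M') {v : ℕ} (hv : v ∈ M'.V) :
    M'.IsRetic v ↔ M.IsRetic v :=
  (hR.sameKindAt v hv).isRetic_iff

lemma isLeafNode_iff (hR : IsPairReduction M a b M') {v : ℕ} (hv : v ∈ M'.V) :
    M'.IsLeafNode v ↔ M.IsLeafNode v :=
  (hR.sameKindAt v hv).isLeafNode_iff

lemma stackFree (hR : IsPairReduction M a b M') (h : M.IsSBTC) (ha : a ∈ M.taxa)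
    (hb : b ∈ M.taxa) : M'.StackFree := by
  rintro ⟨u, w⟩ he ⟨hu, hw⟩
  have hV := hR.mem_V _ he
  rw [hR.isRetic_iff hV.1] at hu
  rw [hR.isRetic_iff hV.2] at hw
  rcases hR.mem_E h ha hb he with hold | ⟨hl, -⟩
  · exact h.stackFree _ hold ⟨hu, hw⟩
  · exact hl.ne_of_isRetic hw rfl

lemma treeChild (hR : IsPairReduction M a b M') (h : M.IsSBTC) (v : ℕ) (hv : v ∈ M'.V)
    (ht : M'.IsTreeNode v) :
    ∃ c ∈ M'.children v, M'.IsTreeNode c ∨ M'.IsLeafNode c := by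
  obtain ⟨c, hc, hck⟩ := h.treeChild v (hR.V_ssubset.subset hv) ((hR.isTreeNode_iff hv).1 ht)
  rcases hR.child_mem v hv c (M.mem_children_iff.1 hc) with hc' | ⟨ℓ, hℓ, hl⟩
  · have hcV := (hR.mem_V _ hc').2
    exact ⟨c, M'.mem_children_iff.2 hc', by rwa [hR.isTreeNode_iff hcV, hR.isLeafNode_iff hcV]⟩
  · exact ⟨ℓ, M'.mem_children_iff.2 hℓ, Or.inr ((hR.isLeafNode_iff (hR.mem_V _ hℓ).2).2 hl)⟩

lemma isSBTC (hR : IsPairReduction M a b M') (h : M.IsSBTC) (ha : a ∈ M.taxa)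
    (hb : b ∈ M.taxa) : M'.IsSBTC where
  root_mem := hR.root_eq ▸ hR.root_mem
  indeg_root := hR.root_eq ▸ (hR.sameKindAt _ hR.root_mem).indeg_eq_zero h.indeg_root
  outdeg_root := hR.root_eq ▸ (hR.sameKindAt _ hR.root_mem).1.trans h.outdeg_root
  mem_V := hR.mem_V
  label_injOn := hR.label_eq ▸ h.label_injOn.mono hR.taxa_subset
  label_mem x hx := by
    obtain ⟨hxT, hxV⟩ := (hR.mem_taxa x).1 hx
    rw [hR.label_eq]
    exact ⟨hxV, (hR.isLeafNode_iff hxV).2 (h.isLeafNode_label hxT)⟩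
  exists_label v hv hl := by
    obtain ⟨x, hx, rfl⟩ := h.exists_label v (hR.V_ssubset.subset hv) ((hR.isLeafNode_iff hv).1 hl)
    exact ⟨x, (hR.mem_taxa x).2 ⟨hx, hv⟩, by rw [hR.label_eq]⟩
  classify v hv := by
    rw [hR.root_eq, hR.isLeafNode_iff hv, hR.isTreeNode_iff hv, hR.isRetic_iff hv]
    exact h.classify v (hR.V_ssubset.subset hv)
  acyclic v hv := h.acyclic v <| Relation.TransGen.lift' id
    (fun _ _ he => (hR.mem_E h ha hb he).elim (.single ·) (·.2)) v v hv
  semiBinary v hv ht := by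
    rw [(hR.sameKindAt v hv).1]
    exact h.semiBinary v (hR.V_ssubset.subset hv) ((hR.isTreeNode_iff hv).1 ht)
  stackFree := hR.stackFree h ha hb
  treeChild := IsPairReduction.treeChild hR h

end IsPairReduction

end

/-! ### Separated forbidden leaves -/

section

def IsSafeSibling (M : Network X) (F : Set X) (c : ℕ) : Prop :=
  ¬ M.IsRetic c ∧ ∀ y ∈ F, y ∈ M.taxa → M.label y ≠ c

/-- The invariant of a tree-child sequence, `F` being the leaves already used as first
coordinates; it ensures that some reducible pair has its second leaf outside `F`. -/
def ForbiddenSeparated (M : Network X) (F : Set X) : Prop :=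
  ∀ x ∈ F, x ∈ M.taxa → ∀ p c, (p, M.label x) ∈ M.E → M.IsTreeNode p → (p, c) ∈ M.E →
    c ≠ M.label x → M.IsSafeSibling F c

lemma IsSBTC.not_isRetic_of_sibling {M : Network X} (h : M.IsSBTC) {p r c : ℕ}
    (hp : M.IsTreeNode p) (hpr : (p, r) ∈ M.E) (hr : M.IsRetic r) (hpc : (p, c) ∈ M.E)
    (hcr : c ≠ r) : ¬ M.IsRetic c := by
  have hpV := (h.mem_V _ hpr).1
  obtain ⟨c', hc', hk⟩ := h.treeChild p hpV hp
  rcases (mem_E_iff_of_outdeg_eq_two (h.semiBinary p hpV hp) hpr hpc hcr.symm c').1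
    (M.mem_children_iff.1 hc') with rfl | rfl
  · rcases hk with hk | hk
    · exact absurd rfl (hk.ne_of_isRetic hr)
    · exact absurd rfl (hk.ne_of_isRetic hr)
  · rcases hk with hk | hk
    · exact fun hc => hk.ne_of_isRetic hc rfl
    · exact fun hc => hk.ne_of_isRetic hc rfl

namespace IsPairReduction

variable {M M' : Network X} {a b : X} {F : Set X}

lemma isSafeSibling_label (hR : IsPairReduction M a b M') (h : M.IsSBTC) (hb : b ∈ M.taxa)
    (hab : a ≠ b) (hbF : b ∉ F) : M'.IsSafeSibling (insert a F) (M.label b) := by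
  refine ⟨fun hr => (h.isLeafNode_label hb).ne_of_isRetic
    ((hR.isRetic_iff (hR.label_mem b hb hab.symm)).1 hr) rfl, fun y hy hyT hyb => ?_⟩
  rw [hR.label_eq] at hyb
  obtain rfl := h.label_injOn (hR.taxa_subset hyT) hb hyb
  exact hy.elim hab.symm hbF

lemma mem_of_mem_insert (hR : IsPairReduction M a b M') {p : ℕ} (hp : M.IsTreeNode p) {y : X}
    (hy : y ∈ insert a F) (hyT : y ∈ M'.taxa) (hpy : (p, M.label y) ∈ M.E) : y ∈ F := by
  rcases hy with rfl | hy
  · exact absurd (hR.isRetic_of_mem_taxa hyT p hpy) (hp.ne_of_isRetic · rfl)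
  · exact hy

lemma isSafeSibling_of_old_parent (hR : IsPairReduction M a b M') (h : M.IsSBTC)
    (ha : a ∈ M.taxa) (hb : b ∈ M.taxa) (hab : a ≠ b) (hbF : b ∉ F) (hF : M.ForbiddenSeparated F)
    {x : X} (hx : x ∈ F) (hxT : x ∈ M'.taxa) {p c : ℕ} (hp : M.IsTreeNode p)
    (hpx : (p, M.label x) ∈ M.E) (hpc : (p, c) ∈ M'.E) (hcx : c ≠ M.label x) :
    M'.IsSafeSibling (insert a F) c := by
  have hxT' := hR.taxa_subset hxT
  have hcV := (hR.mem_V _ hpc).2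
  by_cases hold : (p, c) ∈ M.E
  · obtain ⟨hnr, hlab⟩ := hF x hx hxT' p c hpx hp hold hcx
    refine ⟨by rwa [hR.isRetic_iff hcV], fun y hy hyT hyc => ?_⟩
    rw [hR.label_eq] at hyc
    subst hyc
    exact hlab y (hR.mem_of_mem_insert hp hy hyT hold) (hR.taxa_subset hyT) rfl
  rcases hR.new_edge p c hpc hold with ⟨rfl, -⟩ | ⟨rfl, r, -, hpr, hra⟩
  · exact hR.isSafeSibling_label h hb hab hbF
  have hr := hR.isRetic_of_mem_taxa ((hR.mem_taxa a).2 ⟨ha, hcV⟩) r hra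
  exact absurd hr (hF x hx hxT' p r hpx hp hpr
    ((h.isLeafNode_label hxT').ne_of_isRetic hr).symm).1

lemma isSafeSibling_of_new_parent (hR : IsPairReduction M a b M') (h : M.IsSBTC)
    (hb : b ∈ M.taxa) (hab : a ≠ b) (hbF : b ∉ F) (hF : M.ForbiddenSeparated F)
    (haT : a ∈ M'.taxa) {p r c : ℕ} (hp : M.IsTreeNode p) (hr : r ∉ M'.V)
    (hpr : (p, r) ∈ M.E) (hra : (r, M.label a) ∈ M.E) (hpc : (p, c) ∈ M'.E)
    (hca : c ≠ M.label a) : M'.IsSafeSibling (insert a F) c := by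
  have hrR := hR.isRetic_of_mem_taxa haT r hra
  have hcV := (hR.mem_V _ hpc).2
  by_cases hold : (p, c) ∈ M.E
  · refine ⟨(hR.isRetic_iff hcV).not.2 <|
      h.not_isRetic_of_sibling hp hpr hrR hold (fun hcr => hr (hcr ▸ hcV)),
      fun y hy hyT hyc => ?_⟩
    rw [hR.label_eq] at hyc
    subst hyc
    have hyF := hR.mem_of_mem_insert hp hy hyT hold
    have hyT' := hR.taxa_subset hyT
    exact (hF y hyF hyT' p r hold hp hpr
      ((h.isLeafNode_label hyT').ne_of_isRetic hrR).symm).1 hrR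
  rcases hR.new_edge p c hpc hold with ⟨rfl, -⟩ | ⟨rfl, -⟩
  · exact hR.isSafeSibling_label h hb hab hbF
  · exact absurd rfl hca

lemma forbiddenSeparated (hR : IsPairReduction M a b M') (h : M.IsSBTC) (ha : a ∈ M.taxa)
    (hb : b ∈ M.taxa) (hab : a ≠ b) (hbF : b ∉ F) (hF : M.ForbiddenSeparated F) :
    M'.ForbiddenSeparated (insert a F) := by
  intro x hx hxT p c hpx hp hpc hcx
  rw [hR.label_eq] at hpx hcx
  have hxT' := hR.taxa_subset hxT
  have hpV := (hR.mem_V _ hpx).1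
  rw [hR.isTreeNode_iff hpV] at hp
  by_cases hold : (p, M.label x) ∈ M.E
  · exact hR.isSafeSibling_of_old_parent h ha hb hab hbF hF
      (hR.mem_of_mem_insert hp hx hxT hold) hxT hp hold hpc hcx
  rcases hR.new_edge p _ hpx hold with ⟨hxb, -⟩ | ⟨hxa, r, hr, hpr, hra⟩
  · obtain rfl := h.label_injOn hxT' hb hxb
    exact absurd hx fun hx => hx.elim hab.symm hbF
  · obtain rfl := h.label_injOn hxT' ha hxa
    exact hR.isSafeSibling_of_new_parent h hb hab hbF hF hxT hp hr hpr hra hpc hcx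

end IsPairReduction

end

/-! ### Reducing a cherry -/

section

variable {M : Network X} {a b : X}

noncomputable def removeLeaf (M : Network X) (x : X) : Network X :=
  { V := M.V.erase (M.label x),
    E := M.E.filter (fun e => e.1 ≠ M.label x ∧ e.2 ≠ M.label x),
    root := M.root, taxa := M.taxa.erase x, label := M.label }

lemma reducePair_of_isCherry (hab : M.IsCherry a b) :
    M.reducePair (a, b) = (M.removeLeaf a).suppress (M.theParent (M.label a)) := by
  rw [reducePair, if_pos hab]; rfl

lemma mem_removeLeaf_E {x : X} {e : ℕ × ℕ} :
    e ∈ (M.removeLeaf x).E ↔ e ∈ M.E ∧ e.1 ≠ M.label x ∧ e.2 ≠ M.label x :=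
  Finset.mem_filter

lemma removeLeaf_E (h : M.IsSBTC) {x : X} (hx : x ∈ M.taxa) {p : ℕ}
    (hp : (p, M.label x) ∈ M.E) : (M.removeLeaf x).E = (M.delEdge (p, M.label x)).E := by
  ext ⟨u, w⟩
  rw [mem_removeLeaf_E, mem_delEdge_E]
  constructor
  · rintro ⟨he, -, hw⟩; exact ⟨he, fun h => hw (congrArg Prod.snd h)⟩
  · rintro ⟨he, hne⟩
    refine ⟨he, fun hu => (h.isLeafNode_label hx).not_mem_E (w := w) (by simpa [← hu] using he),
      fun hw => hne ?_⟩
    simp only at hw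
    rw [(h.mem_E_label_iff hx hp u).1 (hw ▸ he), hw]

lemma indeg_removeLeaf (h : M.IsSBTC) {x : X} (hx : x ∈ M.taxa) {p v : ℕ}
    (hp : (p, M.label x) ∈ M.E) :
    (M.removeLeaf x).indeg v = (M.delEdge (p, M.label x)).indeg v := by
  rw [indeg, removeLeaf_E h hx hp]; rfl

lemma outdeg_removeLeaf (h : M.IsSBTC) {x : X} (hx : x ∈ M.taxa) {p v : ℕ}
    (hp : (p, M.label x) ∈ M.E) :
    (M.removeLeaf x).outdeg v = (M.delEdge (p, M.label x)).outdeg v := by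
  rw [outdeg, removeLeaf_E h hx hp]; rfl

lemma removeLeaf_neighbours_of_isCherry (h : M.IsSBTC) (ha : a ∈ M.taxa) (hb : b ∈ M.taxa)
    (hne : a ≠ b) {p q : ℕ} (hpa : (p, M.label a) ∈ M.E) (hpb : (p, M.label b) ∈ M.E)
    (hqp : (q, p) ∈ M.E) :
    (∀ u, (u, p) ∈ (M.removeLeaf a).E ↔ u = q) ∧
    (∀ w, (p, w) ∈ (M.removeLeaf a).E ↔ w = M.label b) ∧ (q, M.label b) ∉ (M.removeLeaf a).E := by
  have hℓ := h.label_ne ha hb hne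
  have hla := h.isLeafNode_label ha
  have hp : M.IsTreeNode p := h.isTreeNode_of_ne hpa hpb hℓ
  have hpℓa : p ≠ M.label a := (hla.ne_of_isTreeNode hp).symm
  refine ⟨fun u => ?_, fun w => ?_, fun hq => h.ne_of_mem_E hqp
    ((h.mem_E_label_iff hb hpb q).1 (mem_removeLeaf_E.1 hq).1)⟩
  · rw [mem_removeLeaf_E, mem_E_iff_of_indeg_eq_one hp.1 hqp]
    exact ⟨(·.1), fun hu => ⟨hu, hu ▸ hla.ne_of_mem_E hqp, hpℓa⟩⟩
  · rw [mem_removeLeaf_E, mem_E_iff_of_outdeg_eq_two (h.semiBinary p (h.mem_V _ hpa).1 hp)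
      hpa hpb hℓ]
    exact ⟨fun ⟨hw, _, hwa⟩ => hw.resolve_left hwa, fun hw => ⟨Or.inr hw, hpℓa, hw ▸ hℓ.symm⟩⟩

@[simp] lemma reducePair_root (c : X × X) : (M.reducePair c).root = M.root := by
  unfold reducePair; split_ifs <;> simp

@[simp] lemma reducePair_label (c : X × X) : (M.reducePair c).label = M.label := by
  unfold reducePair; split_ifs <;> simp

lemma reducePair_shape_of_isCherry (h : M.IsSBTC) (ha : a ∈ M.taxa) (hb : b ∈ M.taxa)
    (hne : a ≠ b) {p q : ℕ} (hpa : (p, M.label a) ∈ M.E) (hpb : (p, M.label b) ∈ M.E)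
    (hqp : (q, p) ∈ M.E) :
    (M.reducePair (a, b)).V = (M.V.erase (M.label a)).erase p ∧
    (M.reducePair (a, b)).taxa = M.taxa.erase a ∧
    (∀ u w, (u, w) ∈ (M.reducePair (a, b)).E ↔ ((u, w) ∈ M.E ∧ u ≠ M.label a ∧
      w ≠ M.label a ∧ u ≠ p ∧ w ≠ p) ∨ (u = q ∧ w = M.label b)) ∧
    ∀ v ∈ (M.reducePair (a, b)).V, SameKindAt M (M.reducePair (a, b)) v := by
  obtain ⟨hu, hw, hqb⟩ := removeLeaf_neighbours_of_isCherry h ha hb hne hpa hpb hqp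
  have hred : M.reducePair (a, b) = (M.removeLeaf a).suppress p := by
    rw [reducePair_of_isCherry ⟨ha, hb, hne, p, hpa, hpb⟩, theParent_eq (h.mem_E_label_iff ha hpa)]
  have hV : (M.reducePair (a, b)).V = (M.V.erase (M.label a)).erase p := by
    rw [hred, suppress_V hu hw]; rfl
  refine ⟨hV, by rw [hred, suppress_taxa]; rfl, fun u w => ?_, fun v hv => ?_⟩
  · rw [hred, mem_suppress_E hu hw, mem_removeLeaf_E, Prod.mk.injEq, and_assoc, and_assoc]
  · rw [hV, Finset.mem_erase, Finset.mem_erase] at hv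
    refine .of_eq ?_ ?_
    · rw [hred, indeg_suppress hu hw hqb hv.1, indeg_removeLeaf h ha hpa,
        indeg_delEdge_of_ne hv.2.1]
    · rw [hred, outdeg_suppress hu hw hqb hv.1, outdeg_removeLeaf h ha hpa,
        outdeg_delEdge_of_ne hv.1]

lemma isPairReduction_of_isCherry (h : M.IsSBTC) (hab : M.IsCherry a b) :
    IsPairReduction M a b (M.reducePair (a, b)) := by
  obtain ⟨ha, hb, hne, p, hpa, hpb⟩ := hab
  have hla := h.isLeafNode_label ha
  have hlb := h.isLeafNode_label hb
  have hp : M.IsTreeNode p := h.isTreeNode_of_ne hpa hpb (h.label_ne ha hb hne)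
  obtain ⟨q, hqp⟩ := exists_mem_E_of_indeg_pos (hp.1 ▸ Nat.one_pos)
  obtain ⟨hV, htaxa, hE, hkind⟩ := reducePair_shape_of_isCherry h ha hb hne hpa hpb hqp
  have hℓV : ∀ x ∈ M.taxa, x ≠ a → M.label x ∈ (M.reducePair (a, b)).V := fun x hx hxa => by
    rw [hV, Finset.mem_erase, Finset.mem_erase]
    exact ⟨(h.isLeafNode_label hx).ne_of_isTreeNode hp, h.label_ne hx ha hxa, (h.label_mem x hx).1⟩
  constructor
  case V_ssubset =>
    rw [hV]
    exact (Finset.erase_subset _ _).trans_ssubset (Finset.erase_ssubset (h.label_mem a ha).1)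
  case root_eq => exact reducePair_root _
  case root_mem => rw [hV]; simp [h.root_mem, (h.ne_root hqp).symm, (h.ne_root hpa).symm]
  case label_eq => exact reducePair_label _
  case mem_taxa =>
    intro x
    rw [htaxa, Finset.mem_erase]
    by_cases hxa : x = a
    · subst hxa; simp [hV]
    · exact ⟨fun hx => ⟨hx.2, hℓV x hx.2 hxa⟩, fun hx => ⟨hxa, hx.1⟩⟩
  case label_mem => exact hℓV
  case mem_V =>
    rintro ⟨u, w⟩ he
    rw [hV]
    rcases (hE u w).1 he with ⟨he, h₁, h₂, h₃, h₄⟩ | ⟨rfl, rfl⟩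
    · simp [h₁, h₂, h₃, h₄, (h.mem_V _ he).1, (h.mem_V _ he).2]
    · simp [h.ne_of_mem_E hqp, hla.ne_of_mem_E hqp, (h.mem_V _ hqp).1,
        hlb.ne_of_isTreeNode hp, (h.label_ne ha hb hne).symm, (h.label_mem b hb).1]
  case sameKindAt => exact hkind
  case child_mem =>
    intro v hv c hvc
    rw [hV, Finset.mem_erase, Finset.mem_erase] at hv
    by_cases hcp : c = p
    · subst hcp
      exact Or.inr ⟨M.label b, (hE _ _).2 (Or.inr ⟨(mem_E_iff_of_indeg_eq_one hp.1 hqp v).1 hvc,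
        rfl⟩), hlb⟩
    · have hca : c ≠ M.label a := fun hc => hv.1 ((h.mem_E_label_iff ha hpa v).1 (hc ▸ hvc))
      exact Or.inl ((hE v c).2 (Or.inl ⟨hvc, hv.2.1, hca, hv.1, hcp⟩))
  case new_edge =>
    intro u w he hold
    rcases (hE u w).1 he with ⟨he', -⟩ | ⟨rfl, rfl⟩
    · exact absurd he' hold
    · exact Or.inl ⟨rfl, .head hqp (.single hpb)⟩
  case isRetic_of_mem_taxa => simp [htaxa]

end

/-! ### Reducing a reticulated cherry -/

section

variable {M : Network X} {a b : X}

noncomputable def cutEdge (M : Network X) (pb pa : ℕ) : Network X :=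
  (M.delEdge (pb, pa)).suppress pb

lemma reducePair_of_isRetCherry (h : M.IsSBTC) {pa pb : ℕ} (ha : a ∈ M.taxa) (hb : b ∈ M.taxa)
    (hpa : (pa, M.label a) ∈ M.E) (hpb : (pb, M.label b) ∈ M.E) (hra : M.IsRetic pa)
    (hab : M.IsRetCherry a b) : M.reducePair (a, b) = (M.cutEdge pb pa).suppress pa := by
  have hnc : ¬ M.IsCherry a b := by
    rintro ⟨-, -, -, p, hpa', hpb'⟩
    have hp : M.IsTreeNode p := h.isTreeNode_of_ne hpa' hpb' (h.label_ne ha hb hab.2.2.1)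
    exact hp.ne_of_isRetic hra ((h.mem_E_label_iff ha hpa p).1 hpa')
  rw [reducePair, if_neg hnc, if_pos hab, theParent_eq (h.mem_E_label_iff ha hpa),
    theParent_eq (h.mem_E_label_iff hb hpb)]
  rfl

section RetCherry

variable {pa pb q : ℕ}

lemma delEdge_neighbours_of_isRetCherry (h : M.IsSBTC) (hb : b ∈ M.taxa)
    (hpb : (pb, M.label b) ∈ M.E) (hra : M.IsRetic pa)
    (htb : M.IsTreeNode pb) (hpbpa : (pb, pa) ∈ M.E) (hq : (q, pb) ∈ M.E) :
    (∀ u, (u, pb) ∈ (M.delEdge (pb, pa)).E ↔ u = q) ∧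
    (∀ w, (pb, w) ∈ (M.delEdge (pb, pa)).E ↔ w = M.label b) ∧
    (q, M.label b) ∉ (M.delEdge (pb, pa)).E := by
  have hne : pa ≠ M.label b := ((h.isLeafNode_label hb).ne_of_isRetic hra).symm
  refine ⟨fun u => ?_, fun w => ?_, fun hq' => ?_⟩
  · rw [mem_delEdge_E, mem_E_iff_of_indeg_eq_one htb.1 hq]
    exact ⟨(·.1), fun hu => ⟨hu, fun he => htb.ne_of_isRetic hra (congrArg Prod.snd he)⟩⟩
  · rw [mem_delEdge_E, mem_E_iff_of_outdeg_eq_two (h.semiBinary pb (h.mem_V _ hpb).1 htb)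
      hpbpa hpb hne]
    constructor
    · rintro ⟨rfl | rfl, hw⟩
      · exact absurd rfl hw
      · rfl
    · rintro rfl; exact ⟨Or.inr rfl, fun he => hne (congrArg Prod.snd he).symm⟩
  · exact h.ne_of_mem_E hq ((h.mem_E_label_iff hb hpb q).1 (mem_delEdge_E.1 hq').1)

lemma mem_cutEdge_E (h : M.IsSBTC) (hb : b ∈ M.taxa) (hpb : (pb, M.label b) ∈ M.E)
    (hra : M.IsRetic pa) (htb : M.IsTreeNode pb) (hpbpa : (pb, pa) ∈ M.E) (hq : (q, pb) ∈ M.E)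
    {u w : ℕ} : (u, w) ∈ (M.cutEdge pb pa).E ↔
      ((u, w) ∈ M.E ∧ u ≠ pb ∧ w ≠ pb) ∨ (u = q ∧ w = M.label b) := by
  obtain ⟨hu, hw, -⟩ := delEdge_neighbours_of_isRetCherry h hb hpb hra htb hpbpa hq
  rw [cutEdge, mem_suppress_E hu hw, mem_delEdge_E, Prod.mk.injEq]
  constructor
  · rintro (⟨⟨he, -⟩, h₁, h₂⟩ | h)
    · exact Or.inl ⟨he, h₁, h₂⟩
    · exact Or.inr h
  · rintro (⟨he, h₁, h₂⟩ | h)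
    · exact Or.inl ⟨⟨he, fun he' => h₁ (congrArg Prod.fst he')⟩, h₁, h₂⟩
    · exact Or.inr h

lemma cutEdge_neighbours_of_indeg_eq_two (h : M.IsSBTC) (ha : a ∈ M.taxa)
    (hb : b ∈ M.taxa) (hpa : (pa, M.label a) ∈ M.E) (hpb : (pb, M.label b) ∈ M.E)
    (hra : M.IsRetic pa) (htb : M.IsTreeNode pb) (hpbpa : (pb, pa) ∈ M.E) (hq : (q, pb) ∈ M.E)
    (hbin : M.indeg pa = 2) {pz : ℕ} (hpz : (pz, pa) ∈ M.E) (hpzb : pz ≠ pb) :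
    (∀ u, (u, pa) ∈ (M.cutEdge pb pa).E ↔ u = pz) ∧
    (∀ w, (pa, w) ∈ (M.cutEdge pb pa).E ↔ w = M.label a) ∧
    (pz, M.label a) ∉ (M.cutEdge pb pa).E := by
  have hla := h.isLeafNode_label ha
  have hE := fun {u w : ℕ} => mem_cutEdge_E (u := u) (w := w) h hb hpb hra htb hpbpa hq
  have hpbpa' : pb ≠ pa := htb.ne_of_isRetic hra
  have hpaℓb : pa ≠ M.label b := ((h.isLeafNode_label hb).ne_of_isRetic hra).symm
  refine ⟨fun u => ?_, fun w => ?_, ?_⟩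
  · rw [hE, mem_E_iff_of_indeg_eq_two hbin hpbpa hpz hpzb.symm]
    constructor
    · rintro (⟨rfl | rfl, hne, -⟩ | ⟨-, he⟩)
      · exact absurd rfl hne
      · rfl
      · exact absurd he hpaℓb
    · rintro rfl; exact Or.inl ⟨Or.inr rfl, hpzb, hpbpa'.symm⟩
  · rw [hE, mem_E_iff_of_outdeg_eq_one hra.2 hpa]
    constructor
    · rintro (⟨hw, -⟩ | ⟨he, -⟩)
      · exact hw
      · exact absurd he.symm (ne_of_outdeg_eq_one hra.2 hpa hq (hla.ne_of_isTreeNode htb).symm)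
    · rintro rfl; exact Or.inl ⟨rfl, hpbpa'.symm, hla.ne_of_isTreeNode htb⟩
  · rw [hE]
    rintro (⟨he, -⟩ | ⟨-, he⟩)
    · exact h.ne_of_mem_E hpz ((h.mem_E_label_iff ha hpa pz).1 he)
    · exact hpbpa' ((h.mem_E_label_iff ha hpa pb).1 (he ▸ hpb))

lemma cutEdge_shape_of_indeg_eq_two (h : M.IsSBTC) (ha : a ∈ M.taxa)
    (hb : b ∈ M.taxa) (hpa : (pa, M.label a) ∈ M.E) (hpb : (pb, M.label b) ∈ M.E)
    (hra : M.IsRetic pa) (htb : M.IsTreeNode pb) (hpbpa : (pb, pa) ∈ M.E) (hq : (q, pb) ∈ M.E)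
    (hbin : M.indeg pa = 2) {pz : ℕ} (hpz : (pz, pa) ∈ M.E) (hpzb : pz ≠ pb) :
    ((M.cutEdge pb pa).suppress pa).V = (M.V.erase pb).erase pa ∧
    (∀ u w, (u, w) ∈ ((M.cutEdge pb pa).suppress pa).E ↔
      ((u, w) ∈ M.E ∧ u ≠ pb ∧ w ≠ pb ∧ u ≠ pa ∧ w ≠ pa) ∨ (u = q ∧ w = M.label b) ∨
        (u = pz ∧ w = M.label a)) ∧
    ∀ v ∈ ((M.cutEdge pb pa).suppress pa).V, SameKindAt M ((M.cutEdge pb pa).suppress pa) v := by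
  obtain ⟨hu, hw, hqb⟩ := delEdge_neighbours_of_isRetCherry h hb hpb hra htb hpbpa hq
  obtain ⟨hu₂, hw₂, hzb⟩ :=
    cutEdge_neighbours_of_indeg_eq_two h ha hb hpa hpb hra htb hpbpa hq hbin hpz hpzb
  have hV : ((M.cutEdge pb pa).suppress pa).V = (M.V.erase pb).erase pa := by
    rw [suppress_V hu₂ hw₂, cutEdge, suppress_V hu hw]; rfl
  refine ⟨hV, fun u w => ?_, fun v hv => ?_⟩
  · rw [mem_suppress_E hu₂ hw₂, mem_cutEdge_E h hb hpb hra htb hpbpa hq, Prod.mk.injEq]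
    constructor
    · rintro (⟨⟨he, h₁, h₂⟩ | h', h₃, h₄⟩ | h')
      · exact Or.inl ⟨he, h₁, h₂, h₃, h₄⟩
      · exact Or.inr (Or.inl h')
      · exact Or.inr (Or.inr h')
    · rintro (⟨he, h₁, h₂, h₃, h₄⟩ | ⟨rfl, rfl⟩ | h')
      · exact Or.inl ⟨Or.inl ⟨he, h₁, h₂⟩, h₃, h₄⟩
      · exact Or.inl ⟨Or.inr ⟨rfl, rfl⟩, ne_of_outdeg_eq_one hra.2 hpa hq
          ((h.isLeafNode_label ha).ne_of_isTreeNode htb).symm,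
          (h.isLeafNode_label hb).ne_of_isRetic hra⟩
      · exact Or.inr h'
  · rw [hV, Finset.mem_erase, Finset.mem_erase] at hv
    refine .of_eq ?_ ?_
    · rw [indeg_suppress hu₂ hw₂ hzb hv.1, cutEdge, indeg_suppress hu hw hqb hv.2.1,
        indeg_delEdge_of_ne hv.1]
    · rw [outdeg_suppress hu₂ hw₂ hzb hv.1, cutEdge, outdeg_suppress hu hw hqb hv.2.1,
        outdeg_delEdge_of_ne hv.2.1]

lemma isPairReduction_suppress_cutEdge_of_indeg_eq_two (h : M.IsSBTC) (ha : a ∈ M.taxa)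
    (hb : b ∈ M.taxa) (hpa : (pa, M.label a) ∈ M.E) (hpb : (pb, M.label b) ∈ M.E)
    (hra : M.IsRetic pa) (htb : M.IsTreeNode pb) (hpbpa : (pb, pa) ∈ M.E) (hq : (q, pb) ∈ M.E)
    (hbin : M.indeg pa = 2) : IsPairReduction M a b ((M.cutEdge pb pa).suppress pa) := by
  obtain ⟨pz, hpz, hpzb⟩ := exists_ne_of_two_le_indeg (u := pb) hbin.ge
  obtain ⟨hV, hE, hkind⟩ :=
    cutEdge_shape_of_indeg_eq_two h ha hb hpa hpb hra htb hpbpa hq hbin hpz hpzb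
  have hla := h.isLeafNode_label ha
  have hlb := h.isLeafNode_label hb
  have hℓV : ∀ x ∈ M.taxa, M.label x ∈ ((M.cutEdge pb pa).suppress pa).V := fun x hx => by
    have hl := h.isLeafNode_label hx
    rw [hV, Finset.mem_erase, Finset.mem_erase]
    exact ⟨hl.ne_of_isRetic hra, hl.ne_of_isTreeNode htb, (h.label_mem x hx).1⟩
  constructor
  case V_ssubset =>
    rw [hV]; exact (Finset.erase_subset _ _).trans_ssubset (Finset.erase_ssubset (h.mem_V _ hpb).1)
  case root_eq => rw [suppress_root, cutEdge, suppress_root]; rfl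
  case root_mem => rw [hV]; simp [h.root_mem, (h.ne_root hpbpa).symm, (h.ne_root hq).symm]
  case label_eq => rw [suppress_label, cutEdge, suppress_label]; rfl
  case mem_taxa =>
    intro x
    rw [suppress_taxa, cutEdge, suppress_taxa, delEdge_taxa, ← cutEdge]
    exact ⟨fun hx => ⟨hx, hℓV x hx⟩, And.left⟩
  case label_mem => exact fun x hx _ => hℓV x hx
  case mem_V =>
    rintro ⟨u, w⟩ he
    rcases (hE u w).1 he with ⟨he, h₁, h₂, h₃, h₄⟩ | ⟨rfl, rfl⟩ | ⟨rfl, rfl⟩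
    · rw [hV]; simp [h₁, h₂, h₃, h₄, (h.mem_V _ he).1, (h.mem_V _ he).2]
    · refine ⟨?_, hℓV b hb⟩
      rw [hV]
      simp [ne_of_outdeg_eq_one hra.2 hpa hq (hla.ne_of_isTreeNode htb).symm, h.ne_of_mem_E hq,
        (h.mem_V _ hq).1]
    · refine ⟨?_, hℓV a ha⟩
      rw [hV]; simp [hpzb, h.ne_of_mem_E hpz, (h.mem_V _ hpz).1]
  case sameKindAt => exact hkind
  case child_mem =>
    intro v hv c hvc
    rw [hV, Finset.mem_erase, Finset.mem_erase] at hv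
    by_cases hcb : c = pb
    · subst hcb
      have hvq := (mem_E_iff_of_indeg_eq_one htb.1 hq v).1 hvc
      exact Or.inr ⟨M.label b, (hE _ _).2 (Or.inr (Or.inl ⟨hvq, rfl⟩)), hlb⟩
    by_cases hca : c = pa
    · subst hca
      have hvz : v = pz :=
        ((mem_E_iff_of_indeg_eq_two hbin hpbpa hpz hpzb.symm v).1 hvc).resolve_left hv.2.1
      exact Or.inr ⟨M.label a, (hE _ _).2 (Or.inr (Or.inr ⟨hvz, rfl⟩)), hla⟩
    · exact Or.inl ((hE v c).2 (Or.inl ⟨hvc, hv.2.1, hcb, hv.1, hca⟩))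
  case new_edge =>
    intro u w he hold
    rcases (hE u w).1 he with ⟨he', -⟩ | ⟨rfl, rfl⟩ | ⟨rfl, rfl⟩
    · exact absurd he' hold
    · exact Or.inl ⟨rfl, .head hq (.single hpb)⟩
    · exact Or.inr ⟨rfl, pa, by simp [hV], hpz, hpa⟩
  case isRetic_of_mem_taxa => exact fun _ r hr => (h.mem_E_label_iff ha hpa r).1 hr ▸ hra

lemma cutEdge_shape_of_two_lt_indeg (h : M.IsSBTC) (hb : b ∈ M.taxa)
    (hpb : (pb, M.label b) ∈ M.E) (hra : M.IsRetic pa) (htb : M.IsTreeNode pb)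
    (hpbpa : (pb, pa) ∈ M.E) (hq : (q, pb) ∈ M.E) (hbin : 2 < M.indeg pa) :
    (M.cutEdge pb pa).suppress pa = M.cutEdge pb pa ∧ (M.cutEdge pb pa).V = M.V.erase pb ∧
    ∀ v ∈ (M.cutEdge pb pa).V, SameKindAt M (M.cutEdge pb pa) v := by
  obtain ⟨hu, hw, hqb⟩ := delEdge_neighbours_of_isRetCherry h hb hpb hra htb hpbpa hq
  have hinpa : (M.cutEdge pb pa).indeg pa = M.indeg pa - 1 := by
    rw [cutEdge, indeg_suppress hu hw hqb (htb.ne_of_isRetic hra).symm, indeg_delEdge hpbpa]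
  have hV : (M.cutEdge pb pa).V = M.V.erase pb := by rw [cutEdge, suppress_V hu hw]; rfl
  refine ⟨suppress_of_indeg_ne_one (by omega), hV, fun v hv => ?_⟩
  rw [hV, Finset.mem_erase] at hv
  have hout : (M.cutEdge pb pa).outdeg v = M.outdeg v := by
    rw [cutEdge, outdeg_suppress hu hw hqb hv.1, outdeg_delEdge_of_ne hv.1]
  by_cases hva : v = pa
  · subst hva; exact ⟨hout, Or.inr ⟨hra, by omega⟩⟩
  · exact .of_eq (by rw [cutEdge, indeg_suppress hu hw hqb hv.1, indeg_delEdge_of_ne hva]) hout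

lemma isPairReduction_suppress_cutEdge_of_two_lt_indeg (h : M.IsSBTC) (ha : a ∈ M.taxa)
    (hb : b ∈ M.taxa) (hpa : (pa, M.label a) ∈ M.E) (hpb : (pb, M.label b) ∈ M.E)
    (hra : M.IsRetic pa) (htb : M.IsTreeNode pb) (hpbpa : (pb, pa) ∈ M.E) (hq : (q, pb) ∈ M.E)
    (hbin : 2 < M.indeg pa) : IsPairReduction M a b ((M.cutEdge pb pa).suppress pa) := by
  obtain ⟨hsupp, hV, hkind⟩ := cutEdge_shape_of_two_lt_indeg h hb hpb hra htb hpbpa hq hbin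
  have hE := fun {u w : ℕ} => mem_cutEdge_E (u := u) (w := w) h hb hpb hra htb hpbpa hq
  rw [hsupp]
  have hℓV : ∀ x ∈ M.taxa, M.label x ∈ (M.cutEdge pb pa).V := fun x hx => by
    rw [hV, Finset.mem_erase]
    exact ⟨(h.isLeafNode_label hx).ne_of_isTreeNode htb, (h.label_mem x hx).1⟩
  constructor
  case V_ssubset => rw [hV]; exact Finset.erase_ssubset (h.mem_V _ hpb).1
  case root_eq => rw [cutEdge, suppress_root]; rfl
  case root_mem => rw [hV]; simp [h.root_mem, (h.ne_root hq).symm]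
  case label_eq => rw [cutEdge, suppress_label]; rfl
  case mem_taxa =>
    intro x
    rw [cutEdge, suppress_taxa, delEdge_taxa, ← cutEdge]
    exact ⟨fun hx => ⟨hx, hℓV x hx⟩, And.left⟩
  case label_mem => exact fun x hx _ => hℓV x hx
  case mem_V =>
    rintro ⟨u, w⟩ he
    rcases hE.1 he with ⟨he, h₁, h₂⟩ | ⟨rfl, rfl⟩
    · rw [hV]; simp [h₁, h₂, (h.mem_V _ he).1, (h.mem_V _ he).2]
    · refine ⟨?_, hℓV b hb⟩
      rw [hV]; simp [h.ne_of_mem_E hq, (h.mem_V _ hq).1]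
  case sameKindAt => exact hkind
  case child_mem =>
    intro v hv c hvc
    rw [hV, Finset.mem_erase] at hv
    by_cases hcb : c = pb
    · subst hcb
      exact Or.inr ⟨M.label b, hE.2 (Or.inr ⟨(mem_E_iff_of_indeg_eq_one htb.1 hq v).1 hvc, rfl⟩),
        h.isLeafNode_label hb⟩
    · exact Or.inl (hE.2 (Or.inl ⟨hvc, hv.1, hcb⟩))
  case new_edge =>
    intro u w he hold
    rcases hE.1 he with ⟨he', -⟩ | ⟨rfl, rfl⟩
    · exact absurd he' hold
    · exact Or.inl ⟨rfl, .head hq (.single hpb)⟩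
  case isRetic_of_mem_taxa => exact fun _ r hr => (h.mem_E_label_iff ha hpa r).1 hr ▸ hra

end RetCherry

lemma isPairReduction_of_isRetCherry (h : M.IsSBTC) (hab : M.IsRetCherry a b) :
    IsPairReduction M a b (M.reducePair (a, b)) := by
  obtain ⟨ha, hb, -, pa, pb, hpa, hpb, hra, htb, hpbpa⟩ := id hab
  obtain ⟨q, hq⟩ := exists_mem_E_of_indeg_pos (htb.1 ▸ Nat.one_pos)
  rw [reducePair_of_isRetCherry h ha hb hpa hpb hra hab]
  rcases hra.1.eq_or_lt with hbin | hbin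
  · exact isPairReduction_suppress_cutEdge_of_indeg_eq_two h ha hb hpa hpb hra htb hpbpa hq
      hbin.symm
  · exact isPairReduction_suppress_cutEdge_of_two_lt_indeg h ha hb hpa hpb hra htb hpbpa hq
      hbin

lemma isPairReduction_reducePair (h : M.IsSBTC) (hab : M.ReduciblePair a b) :
    IsPairReduction M a b (M.reducePair (a, b)) :=
  hab.elim (isPairReduction_of_isCherry h) (isPairReduction_of_isRetCherry h)

end

/-! ### A reducible pair avoiding the forbidden leaves -/

section

variable {M : Network X}

namespace IsSBTC

lemma not_isRetic_of_forall_not_isTreeNode (h : M.IsSBTC)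
    (hnt : ∀ v ∈ M.V, ¬ M.IsTreeNode v) (v : ℕ) : ¬ M.IsRetic v := by
  intro hv
  have hroot : ∀ u, (u, v) ∈ M.E → u = M.root := fun u hu => by
    rcases h.classify u (h.mem_V _ hu).1 with hr | hl | ht | hr
    · exact hr
    · exact absurd hu hl.not_mem_E
    · exact absurd ht (hnt u (h.mem_V _ hu).1)
    · exact absurd ⟨hr, hv⟩ (h.stackFree _ hu)
  obtain ⟨u, hu⟩ := exists_mem_E_of_indeg_pos (M := M) (v := v) (by have := hv.1; omega)
  obtain ⟨x, hx, hxu⟩ := exists_ne_of_two_le_indeg (u := u) hv.1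
  exact hxu ((hroot x hx).trans (hroot u hu).symm)

lemma isSingleLeaf_of_forall_not_isTreeNode (h : M.IsSBTC)
    (hnt : ∀ v ∈ M.V, ¬ M.IsTreeNode v) : M.IsSingleLeaf := by
  have hleaf : ∀ v ∈ M.V, v ≠ M.root → M.IsLeafNode v := fun v hv hvr => by
    rcases h.classify v hv with hr | hl | ht | hr
    · exact absurd hr hvr
    · exact hl
    · exact absurd ht (hnt v hv)
    · exact absurd hr (h.not_isRetic_of_forall_not_isTreeNode hnt v)
  have hfst : ∀ e ∈ M.E, e.1 = M.root := fun e he => by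
    by_contra hne
    exact (hleaf _ (h.mem_V e he).1 hne).not_mem_E (w := e.2) he
  obtain ⟨c, hc⟩ := Finset.card_pos.1 (M.outdeg_eq_card_children _ ▸ h.outdeg_root.ge)
  rw [mem_children_iff] at hc
  have hchild := mem_E_iff_of_outdeg_eq_one h.outdeg_root hc
  have hE : M.E = {(M.root, c)} := by
    ext ⟨u, w⟩
    constructor
    · intro he
      obtain rfl : u = M.root := hfst _ he
      simp [(hchild w).1 he]
    · simp only [Finset.mem_singleton]; rintro ⟨⟩; exact hc
  have hcV := (h.mem_V _ hc).2
  obtain ⟨x, hx, rfl⟩ := h.exists_label c hcV (hleaf c hcV (h.ne_root hc))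
  refine ⟨x, hx, ?_, hE, (h.ne_root hc).symm⟩
  ext v
  simp only [Finset.mem_insert, Finset.mem_singleton]
  refine ⟨fun hv => or_iff_not_imp_left.2 fun hvr => ?_, ?_⟩
  · obtain ⟨u, hu⟩ := exists_mem_E_of_indeg_pos ((hleaf v hv hvr).1 ▸ Nat.one_pos)
    rw [hE, Finset.mem_singleton] at hu
    exact (Prod.mk.inj hu).2
  · rintro (rfl | rfl)
    · exact h.root_mem
    · exact hcV

lemma exists_lowest_treeNode (h : M.IsSBTC) (hns : ¬ M.IsSingleLeaf) :
    ∃ t ∈ M.V, M.IsTreeNode t ∧ ∀ c, (t, c) ∈ M.E →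
      M.IsLeafNode c ∨ (M.IsRetic c ∧ ∃ d, (c, d) ∈ M.E ∧ M.IsLeafNode d) := by
  have hne : (M.V.filter M.IsTreeNode).Nonempty := by
    by_contra hemp
    refine hns (h.isSingleLeaf_of_forall_not_isTreeNode fun v hv ht => hemp ⟨v, ?_⟩)
    exact Finset.mem_filter.2 ⟨hv, ht⟩
  obtain ⟨t, ht, hmax⟩ := Finset.exists_maximal_of_acyclic h.acyclic hne
  rw [Finset.mem_filter] at ht
  have hbelow : ∀ w, Relation.TransGen (fun a b => (a, b) ∈ M.E) t w → ¬ M.IsTreeNode w :=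
    fun w htw hw => by
      obtain ⟨x, -, hxw⟩ := Relation.TransGen.tail'_iff.1 htw
      exact hmax w (Finset.mem_filter.2 ⟨(h.mem_V _ hxw).2, hw⟩) htw
  refine ⟨t, ht.1, ht.2, fun c hc => ?_⟩
  rcases h.classify c (h.mem_V _ hc).2 with hr | hl | htc | hr
  · exact absurd hr (h.ne_root hc)
  · exact Or.inl hl
  · exact absurd htc (hbelow c (.single hc))
  obtain ⟨d, hd⟩ := Finset.card_pos.1 (M.outdeg_eq_card_children c ▸ hr.2.ge)
  rw [mem_children_iff] at hd
  refine Or.inr ⟨hr, d, hd, ?_⟩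
  rcases h.classify d (h.mem_V _ hd).2 with hr' | hl | htd | hr'
  · exact absurd hr' (h.ne_root hd)
  · exact hl
  · exact absurd htd (hbelow d (.tail (.single hc) hd))
  · exact absurd ⟨hr, hr'⟩ (h.stackFree _ hd)

lemma exists_reduciblePair (h : M.IsSBTC) {F : Set X} (hF : M.ForbiddenSeparated F)
    (hns : ¬ M.IsSingleLeaf) : ∃ a b, M.ReduciblePair a b ∧ b ∉ F := by
  obtain ⟨t, htV, ht, hlow⟩ := h.exists_lowest_treeNode hns
  obtain ⟨w, hw, hwk⟩ := h.treeChild t htV ht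
  rw [mem_children_iff] at hw
  have hwl : M.IsLeafNode w := by
    rcases hlow w hw with hl | ⟨hr, -⟩
    · exact hl
    · rcases hwk with hwt | hwl
      · exact absurd rfl (hwt.ne_of_isRetic hr)
      · exact absurd rfl (hwl.ne_of_isRetic hr)
  obtain ⟨y, hy, rfl⟩ := h.exists_label w (h.mem_V _ hw).2 hwl
  obtain ⟨c, hc, hcy⟩ := exists_ne_of_outdeg_eq_two (w := M.label y) (h.semiBinary t htV ht)
  rcases hlow c hc with hcl | ⟨hcr, d, hcd, hdl⟩
  · obtain ⟨x, hx, rfl⟩ := h.exists_label _ (h.mem_V _ hc).2 hcl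
    have hxy : x ≠ y := fun hxy => hcy (hxy ▸ rfl)
    by_cases hyF : y ∈ F
    · by_cases hxF : x ∈ F
      · exact absurd rfl ((hF x hxF hx t _ hc ht hw hcy.symm).2 y hyF hy)
      · exact ⟨y, x, Or.inl ⟨hy, hx, hxy.symm, t, hw, hc⟩, hxF⟩
    · exact ⟨x, y, Or.inl ⟨hx, hy, hxy, t, hc, hw⟩, hyF⟩
  · obtain ⟨x, hx, rfl⟩ := h.exists_label d (h.mem_V _ hcd).2 hdl
    have hxy : x ≠ y := by
      rintro rfl
      exact h.ne_of_mem_E hc ((h.mem_E_label_iff hx hw c).1 hcd).symm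
    exact ⟨x, y, Or.inr ⟨hx, hy, hxy, c, t, hcd, hw, hcr, ht, hc⟩,
      fun hyF => (hF y hyF hy t c hw ht hc hcy).1 hcr⟩

end IsSBTC

end

/-! ### Tree-child sequences -/

section

variable {M N : Network X} {a b : X} {S : List (X × X)}

lemma reducePair_of_not_reduciblePair (hab : ¬ M.ReduciblePair a b) : M.reducePair (a, b) = M := by
  rw [ReduciblePair, not_or] at hab
  rw [reducePair, if_neg hab.1, if_neg hab.2]

lemma reduciblePair_of_reducePair_ne (hab : M.reducePair (a, b) ≠ M) : M.ReduciblePair a b :=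
  not_imp_comm.1 reducePair_of_not_reduciblePair hab

lemma ReduciblePair.ne (hab : M.ReduciblePair a b) : a ≠ b :=
  hab.elim (·.2.2.1) (·.2.2.1)

lemma ReduciblePair.left_mem (hab : M.ReduciblePair a b) : a ∈ M.taxa :=
  hab.elim (·.1) (·.1)

lemma ReduciblePair.right_mem (hab : M.ReduciblePair a b) : b ∈ M.taxa :=
  hab.elim (·.2.1) (·.2.1)

lemma reduceSeq_concat (p : X × X) : N.reduceSeq (S ++ [p]) = (N.reduceSeq S).reducePair p := by
  simp [reduceSeq]

lemma IsSBTC.taxa_eq_singleton (h : M.IsSBTC) (hM : M.IsSingleLeaf) : ∃ x, M.taxa = {x} := by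
  obtain ⟨x, hx, hV, -, -⟩ := hM
  refine ⟨x, Finset.eq_singleton_iff_unique_mem.2 ⟨hx, fun y hy => ?_⟩⟩
  have hyV := (h.label_mem y hy).1
  rw [hV, Finset.mem_insert, Finset.mem_singleton] at hyV
  rcases hyV with hyr | hyx
  · have := (h.isLeafNode_label hy).1; rw [hyr, h.indeg_root] at this; omega
  · exact h.label_injOn hy hx hyx

lemma IsTCS.pairwise (hS : IsTCS S) : S.Pairwise (fun p q => p.1 ≠ q.2) :=
  List.pairwise_iff_getElem.2 fun i j hi hj hij => hS.2 i j hi hj hij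

/-- A prefix of a minimal tree-child sequence for `N` that can still be extended greedily. -/
structure IsTCPrefix (N : Network X) (S : List (X × X)) : Prop where
  isSBTC : (N.reduceSeq S).IsSBTC
  forbiddenSeparated : (N.reduceSeq S).ForbiddenSeparated {x | x ∈ S.map Prod.fst}
  ne : ∀ p ∈ S, p.1 ≠ p.2
  pairwise : S.Pairwise (fun p q => p.1 ≠ q.2)
  changes : ∀ i < S.length, N.reduceSeq (S.take (i + 1)) ≠ N.reduceSeq (S.take i)
  snd_mem : ∀ (i : ℕ) (hi : i < S.length),
    S[i].2 ∈ (S.drop (i + 1)).map Prod.fst ∨ S[i].2 ∈ (N.reduceSeq S).taxa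

namespace IsTCPrefix

lemma nil (hN : N.IsSBTC) : IsTCPrefix N [] where
  isSBTC := hN
  forbiddenSeparated := fun _ hx => by simp at hx
  ne := by simp
  pairwise := .nil
  changes := by simp
  snd_mem := by simp

lemma append (hS : IsTCPrefix N S) (hab : (N.reduceSeq S).ReduciblePair a b)
    (hb : b ∉ S.map Prod.fst) : IsTCPrefix N (S ++ [(a, b)]) := by
  have hR := isPairReduction_reducePair hS.isSBTC hab
  have ha := hab.left_mem
  have hbT := hab.right_mem
  have hF : {x | x ∈ (S ++ [(a, b)]).map Prod.fst} = insert a {x | x ∈ S.map Prod.fst} := by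
    ext x; simp [or_comm]
  rw [← reduceSeq_concat] at hR
  constructor
  case isSBTC => exact hR.isSBTC hS.isSBTC ha hbT
  case forbiddenSeparated =>
    rw [hF]
    exact hR.forbiddenSeparated hS.isSBTC ha hbT hab.ne hb hS.forbiddenSeparated
  case ne =>
    simp only [List.mem_append, List.mem_singleton]
    rintro p (hp | rfl)
    · exact hS.ne p hp
    · exact hab.ne
  case pairwise =>
    refine List.pairwise_append.2 ⟨hS.pairwise, List.pairwise_singleton _ _, ?_⟩
    intro p hp q hq
    rw [List.mem_singleton] at hq
    subst hq
    exact fun hpb => hb (List.mem_map.2 ⟨p, hp, hpb⟩)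
  case changes =>
    intro i hi
    rw [List.length_append, List.length_singleton] at hi
    rcases Nat.lt_succ_iff_lt_or_eq.1 hi with hi | rfl
    · rw [List.take_append_of_le_length hi, List.take_append_of_le_length hi.le]
      exact hS.changes i hi
    · rw [List.take_of_length_le (by simp), List.take_append_of_le_length le_rfl,
        List.take_length]
      exact fun he => (he ▸ hR.card_lt).false
  case snd_mem =>
    intro i hi
    rw [List.length_append, List.length_singleton] at hi
    rcases Nat.lt_succ_iff_lt_or_eq.1 hi with hi | rfl
    · rw [List.getElem_append_left hi, List.drop_append_of_le_length hi, List.map_append,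
        List.mem_append]
      by_cases hia : S[i].2 = a
      · exact Or.inl (Or.inr (by simp [hia]))
      · exact (hS.snd_mem i hi).imp Or.inl (hR.mem_taxa_of_ne · hia)
    · rw [List.getElem_concat_length rfl]
      exact Or.inr (hR.mem_taxa_of_ne hbT hab.ne.symm)

lemma of_pairwise (hN : N.IsSBTC) (hS : S.Pairwise (fun p q => p.1 ≠ q.2))
    (hch : ∀ i < S.length, N.reduceSeq (S.take (i + 1)) ≠ N.reduceSeq (S.take i)) :
    IsTCPrefix N S := by
  induction S using List.reverseRecOn with
  | nil => exact nil hN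
  | append_singleton S p ih =>
    obtain ⟨hS, -, hSp⟩ := List.pairwise_append.1 hS
    have hprefix : ∀ i < S.length, N.reduceSeq (S.take (i + 1)) ≠ N.reduceSeq (S.take i) :=
      fun i hi => by
        have := hch i (by simp; omega)
        rwa [List.take_append_of_le_length hi, List.take_append_of_le_length hi.le] at this
    have hlast : (N.reduceSeq S).reducePair p ≠ N.reduceSeq S := by
      have := hch S.length (by simp)
      rwa [List.take_of_length_le (by simp), List.take_append_of_le_length le_rfl,
        List.take_length, reduceSeq_concat] at this
    exact (ih hS hprefix).append (reduciblePair_of_reducePair_ne hlast) fun hp =>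
      let ⟨q, hq, hqp⟩ := List.mem_map.1 hp
      hSp q hq p (List.mem_singleton_self p) hqp

lemma exists_append_isSingleLeaf (hS : IsTCPrefix N S) :
    ∃ T, IsTCPrefix N (S ++ T) ∧ (N.reduceSeq (S ++ T)).IsSingleLeaf := by
  induction hn : (N.reduceSeq S).V.card using Nat.strong_induction_on generalizing S with
  | _ n ih =>
    by_cases hleaf : (N.reduceSeq S).IsSingleLeaf
    · exact ⟨[], by simpa using hS, by simpa using hleaf⟩
    obtain ⟨a, b, hab, hb⟩ := hS.isSBTC.exists_reduciblePair hS.forbiddenSeparated hleaf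
    have hS' := hS.append hab hb
    have hlt : (N.reduceSeq (S ++ [(a, b)])).V.card < n :=
      hn ▸ reduceSeq_concat (a, b) ▸ (isPairReduction_reducePair hS.isSBTC hab).card_lt
    obtain ⟨T, hT, hTleaf⟩ := ih _ hlt hS' rfl
    exact ⟨(a, b) :: T, by simpa using hT, by simpa using hTleaf⟩

lemma isMinimalTCS (hS : IsTCPrefix N S) (hleaf : Reduces S N) : IsMinimalTCS S N := by
  obtain ⟨x, hx⟩ := hS.isSBTC.taxa_eq_singleton hleaf
  have hlast : ∀ (i : ℕ) (hi : i < S.length), S[i].2 ∈ (S.drop (i + 1)).map Prod.fst ∨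
      ∃ q, S.getLast? = some q ∧ S[i].2 = q.2 := fun i hi => by
    refine (hS.snd_mem i hi).imp_right fun hiT => ⟨S[S.length - 1], ?_, ?_⟩
    · rw [List.getLast?_eq_getElem?, List.getElem?_eq_getElem]
    · -- nothing follows the last pair, so its second leaf is the one left at the end
      have hlen : S.length - 1 < S.length := by omega
      have := (hS.snd_mem _ hlen).resolve_left (by simp [show S.length - 1 + 1 = S.length by omega])
      rw [hx, Finset.mem_singleton] at this hiT
      rw [this, hiT]
  exact ⟨⟨⟨hS.ne, fun i hi => hlast i hi⟩, fun i j hi hj hij =>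
    List.pairwise_iff_getElem.1 hS.pairwise i j hi hj hij⟩, hleaf, hS.changes⟩

end IsTCPrefix

end

end Network

open Network

/-- a partial TCS each of whose elements reduces something in a
semi-binary tree-child network `N` extends to a minimal TCS for `N`. -/
theorem partial_TCS_extends_to_minimal_TCS (X : Type) (N : Network X)
    (hN : N.IsPhylo) (hsb : N.SemiBinary) (htc : N.IsTreeChild)
    (S : List (X × X)) (hpart : IsPartialTCS S)
    (hchange : ∀ i < S.length,
      N.reduceSeq (S.take (i + 1)) ≠ N.reduceSeq (S.take i)) :
    ∃ T : List (X × X), IsMinimalTCS (S ++ T) N := by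
  obtain ⟨T₀, hT₀⟩ := hpart
  have hS : IsTCPrefix N S := .of_pairwise (.of_isPhylo hN hsb htc)
    (List.pairwise_append.1 hT₀.pairwise).1 hchange
  obtain ⟨T, hT, hleaf⟩ := hS.exists_append_isSingleLeaf
  exact ⟨T, hT.isMinimalTCS hleaf⟩
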